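/- Let M ⊆ X and N ⊆ Y be closed subspaces of Banach spaces X, Y over 𝕜 (𝕜 = ℝ or ℂ), and suppose that for every F in the algebraic tensor product M ⊗ N the projective norm of F computed in M ⊗ N equals the projective norm of its canonical image in X ⊗ Y. Then every bounded bilinear form φ : M × N → 𝕜 admits a bounded bilinear extension φ̂ : X × Y → 𝕜 with ‖φ̂‖ = ‖φ‖. -/

import Mathlib

/-- The canonical operator-norm group structure on `N →L[𝕜] Z` for a submodule `N`;
this is definitionally the canonical Mathlib instance, registered to help instance search. -/
noncomputable instance instCLMNormedAddCommGroupOfSubmodule {𝕜 : Type*} [RCLike 𝕜] {Y Z : Type*}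
    [NormedAddCommGroup Y] [NormedSpace 𝕜 Y]
    [NormedAddCommGroup Z] [NormedSpace 𝕜 Z] (N : Submodule 𝕜 Y) :
    NormedAddCommGroup (↥N →L[𝕜] Z) := inferInstance

/-- The canonical normed-space structure on `N →L[𝕜] Z` for a submodule `N`;
this is definitionally the canonical Mathlib instance, registered to help instance search. -/
noncomputable instance instCLMNormedSpaceOfSubmodule {𝕜 : Type*} [RCLike 𝕜] {Y Z : Type*}
    [NormedAddCommGroup Y] [NormedSpace 𝕜 Y]
    [NormedAddCommGroup Z] [NormedSpace 𝕜 Z] (N : Submodule 𝕜 Y) :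
    NormedSpace 𝕜 (↥N →L[𝕜] Z) := inferInstance

/-- The projective norm of an element `F` of the algebraic tensor product `X ⊗ Y` of two
normed spaces: the infimum of `Σᵢ ‖xᵢ‖·‖yᵢ‖` over all finite representations
`F = Σᵢ xᵢ ⊗ yᵢ`. -/
noncomputable def projNorm (𝕜 : Type*) [RCLike 𝕜] {X Y : Type*}
    [NormedAddCommGroup X] [NormedSpace 𝕜 X]
    [NormedAddCommGroup Y] [NormedSpace 𝕜 Y]
    (F : TensorProduct 𝕜 X Y) : ℝ :=
  sInf {r : ℝ | ∃ (n : ℕ) (x : Fin n → X) (y : Fin n → Y),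
    F = ∑ i, x i ⊗ₜ[𝕜] y i ∧ r = ∑ i, ‖x i‖ * ‖y i‖}


open scoped TensorProduct BigOperators
open Finset

section PN
variable (𝕜 : Type*) [RCLike 𝕜] {X Y : Type*}
    [NormedAddCommGroup X] [NormedSpace 𝕜 X]
    [NormedAddCommGroup Y] [NormedSpace 𝕜 Y]

def pnSet (F : TensorProduct 𝕜 X Y) : Set ℝ :=
  {r : ℝ | ∃ (n : ℕ) (x : Fin n → X) (y : Fin n → Y),
    F = ∑ i, x i ⊗ₜ[𝕜] y i ∧ r = ∑ i, ‖x i‖ * ‖y i‖}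

variable {𝕜}

lemma projNorm_eq (F : TensorProduct 𝕜 X Y) : projNorm 𝕜 F = sInf (pnSet 𝕜 F) := rfl

lemma pnSet_nonneg {F : TensorProduct 𝕜 X Y} {r : ℝ} (hr : r ∈ pnSet 𝕜 F) : 0 ≤ r := by
  obtain ⟨n, x, y, -, rfl⟩ := hr
  exact Finset.sum_nonneg fun i _ => mul_nonneg (norm_nonneg _) (norm_nonneg _)

lemma pnSet_bddBelow (F : TensorProduct 𝕜 X Y) : BddBelow (pnSet 𝕜 F) :=
  ⟨0, fun r hr => pnSet_nonneg hr⟩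

lemma pnSet_nonempty (F : TensorProduct 𝕜 X Y) : (pnSet 𝕜 F).Nonempty := by
  induction F using TensorProduct.induction_on with
  | zero => exact ⟨0, 0, Fin.elim0, Fin.elim0, by simp, by simp⟩
  | tmul x y => exact ⟨‖x‖ * ‖y‖, 1, fun _ => x, fun _ => y, by simp, by simp⟩
  | add F G hF hG =>
    obtain ⟨r, n, x, y, hFr, hr⟩ := hF
    obtain ⟨s, m, x', y', hGs, hs⟩ := hG
    refine ⟨r + s, n + m, Fin.append x x', Fin.append y y', ?_, ?_⟩
    · rw [Fin.sum_univ_add, hFr, hGs]; simp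
    · rw [Fin.sum_univ_add, hr, hs]; simp

lemma pnSet_add {F G : TensorProduct 𝕜 X Y} {r s : ℝ}
    (hr : r ∈ pnSet 𝕜 F) (hs : s ∈ pnSet 𝕜 G) : r + s ∈ pnSet 𝕜 (F + G) := by
  obtain ⟨n, x, y, hFr, rfl⟩ := hr
  obtain ⟨m, x', y', hGs, rfl⟩ := hs
  refine ⟨n + m, Fin.append x x', Fin.append y y', ?_, ?_⟩
  · rw [Fin.sum_univ_add, hFr, hGs]; simp
  · rw [Fin.sum_univ_add]; simp

lemma projNorm_nonneg (F : TensorProduct 𝕜 X Y) : 0 ≤ projNorm 𝕜 F :=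
  le_csInf (pnSet_nonempty F) fun _ hr => pnSet_nonneg hr

lemma projNorm_zero : projNorm 𝕜 (0 : TensorProduct 𝕜 X Y) = 0 :=
  le_antisymm (csInf_le (pnSet_bddBelow 0) ⟨0, Fin.elim0, Fin.elim0, by simp, by simp⟩)
    (projNorm_nonneg 0)

lemma projNorm_add_le (F G : TensorProduct 𝕜 X Y) :
    projNorm 𝕜 (F + G) ≤ projNorm 𝕜 F + projNorm 𝕜 G := by
  refine le_of_forall_pos_le_add fun ε hε => ?_
  obtain ⟨r, hrS, hr⟩ := exists_lt_of_csInf_lt (pnSet_nonempty F)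
    (lt_add_of_pos_right (projNorm 𝕜 F) (half_pos hε))
  obtain ⟨s, hsS, hs⟩ := exists_lt_of_csInf_lt (pnSet_nonempty G)
    (lt_add_of_pos_right (projNorm 𝕜 G) (half_pos hε))
  have := csInf_le (pnSet_bddBelow (F + G)) (pnSet_add hrS hsS)
  rw [projNorm_eq]
  linarith

lemma projNorm_neg (F : TensorProduct 𝕜 X Y) : projNorm 𝕜 (-F) = projNorm 𝕜 F := by
  have key : ∀ (G : TensorProduct 𝕜 X Y), pnSet 𝕜 G ⊆ pnSet 𝕜 (-G) := by
    rintro G r ⟨n, x, y, hG, rfl⟩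
    exact ⟨n, -x, y, by simp [hG, ← Finset.sum_neg_distrib, TensorProduct.neg_tmul], by simp⟩
  refine le_antisymm ?_ ?_
  · exact csInf_le_csInf (pnSet_bddBelow _) (pnSet_nonempty F) (key F)
  · exact csInf_le_csInf (pnSet_bddBelow _) ((pnSet_nonempty F).mono (key F))
      (by simpa using key (-F) : pnSet 𝕜 (-F) ⊆ pnSet 𝕜 F)

lemma projNorm_smul_le (c : 𝕜) (F : TensorProduct 𝕜 X Y) :
    projNorm 𝕜 (c • F) ≤ ‖c‖ * projNorm 𝕜 F := by
  rw [projNorm_eq, projNorm_eq, ← smul_eq_mul,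
    ← Real.sInf_smul_of_nonneg (norm_nonneg c)]
  refine csInf_le_csInf (pnSet_bddBelow _) ((pnSet_nonempty F).image _) ?_
  rintro r ⟨s, ⟨n, x, y, hF, rfl⟩, rfl⟩
  refine ⟨n, fun i => c • x i, y, ?_, ?_⟩
  · rw [hF, Finset.smul_sum]; simp [TensorProduct.smul_tmul']
  · simp [norm_smul, Finset.mul_sum, mul_assoc]

end PN

lemma projNorm_tmul_le {𝕜 : Type*} [RCLike 𝕜] {X Y : Type*}
    [NormedAddCommGroup X] [NormedSpace 𝕜 X]
    [NormedAddCommGroup Y] [NormedSpace 𝕜 Y] (x : X) (y : Y) :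
    projNorm 𝕜 (x ⊗ₜ[𝕜] y) ≤ ‖x‖ * ‖y‖ :=
  csInf_le (pnSet_bddBelow _) ⟨1, fun _ => x, fun _ => y, by simp, by simp⟩

lemma norm_lift_le {𝕜 : Type*} [RCLike 𝕜] {X Y : Type*}
    [NormedAddCommGroup X] [NormedSpace 𝕜 X]
    [NormedAddCommGroup Y] [NormedSpace 𝕜 Y]
    (B : X →ₗ[𝕜] Y →ₗ[𝕜] 𝕜) {C : ℝ} (hC : 0 ≤ C)
    (hB : ∀ x y, ‖B x y‖ ≤ C * (‖x‖ * ‖y‖)) (F : TensorProduct 𝕜 X Y) :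
    ‖TensorProduct.lift B F‖ ≤ C * projNorm 𝕜 F := by
  rw [projNorm_eq, ← smul_eq_mul, ← Real.sInf_smul_of_nonneg hC]
  refine le_csInf ((pnSet_nonempty F).image _) ?_
  rintro r ⟨s, ⟨n, x, y, hF, rfl⟩, rfl⟩
  rw [hF, map_sum]
  refine (norm_sum_le _ _).trans ?_
  simp only [TensorProduct.lift.tmul, smul_eq_mul, Finset.mul_sum]
  exact Finset.sum_le_sum fun i _ => hB (x i) (y i)


/-- If the projective norm on `M ⊗ N` agrees with the projective norm induced from
`X ⊗ Y`, then every bounded bilinear form on `M × N` extends to `X × Y` with the same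
norm. -/
theorem stmt_16 {𝕜 : Type*} [RCLike 𝕜] {X Y : Type*}
    [NormedAddCommGroup X] [NormedSpace 𝕜 X] [CompleteSpace X]
    [NormedAddCommGroup Y] [NormedSpace 𝕜 Y] [CompleteSpace Y]
    (M : Submodule 𝕜 X) (N : Submodule 𝕜 Y)
    (hMc : IsClosed (M : Set X)) (hNc : IsClosed (N : Set Y))
    (h : ∀ F : TensorProduct 𝕜 M N,
      projNorm 𝕜 F = projNorm 𝕜 (TensorProduct.map M.subtype N.subtype F))
    (φ : M →L[𝕜] N →L[𝕜] 𝕜) :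
    ∃ φhat : X →L[𝕜] Y →L[𝕜] 𝕜,
      (∀ (u : M) (v : N), φhat (u : X) (v : Y) = φ u v) ∧ ‖φhat‖ = ‖φ‖ := by
  classical
  letI : SeminormedAddCommGroup (TensorProduct 𝕜 X Y) :=
    AddGroupSeminorm.toSeminormedAddCommGroup
      { toFun := projNorm 𝕜
        map_zero' := projNorm_zero
        add_le' := projNorm_add_le
        neg' := projNorm_neg }
  letI : NormedSpace 𝕜 (TensorProduct 𝕜 X Y) :=
    { norm_smul_le := fun c F => projNorm_smul_le c F }
  have hnorm : ∀ F : TensorProduct 𝕜 X Y, ‖F‖ = projNorm 𝕜 F := fun _ => rfl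
  set ι := TensorProduct.map M.subtype N.subtype with hι
  let B : M →ₗ[𝕜] N →ₗ[𝕜] 𝕜 :=
    { toFun := fun u => (φ u).toLinearMap
      map_add' := by intros; ext; simp
      map_smul' := by intros; ext; simp }
  let f : TensorProduct 𝕜 M N →ₗ[𝕜] 𝕜 := TensorProduct.lift B
  have hBle : ∀ (u : M) (v : N), ‖B u v‖ ≤ ‖φ‖ * (‖u‖ * ‖v‖) := fun u v => by
    simpa [mul_assoc, B] using φ.le_opNorm₂ u v
  have hf : ∀ F, ‖f F‖ ≤ ‖φ‖ * projNorm 𝕜 F := fun F =>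
    norm_lift_le B (norm_nonneg φ) hBle F
  have hker : LinearMap.ker ι ≤ LinearMap.ker f := by
    intro F hF
    have h1 : projNorm 𝕜 F = 0 := by
      rw [h F, LinearMap.mem_ker.mp hF, projNorm_zero]
    have h2 := hf F
    rw [h1, mul_zero] at h2
    exact LinearMap.mem_ker.mpr (norm_le_zero_iff.mp h2)
  let p : Submodule 𝕜 (TensorProduct 𝕜 X Y) := LinearMap.range ι
  let e := LinearMap.quotKerEquivRange ι
  let g₀lin : p →ₗ[𝕜] 𝕜 := (Submodule.liftQ _ f hker).comp (e.symm : p →ₗ[𝕜] _)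
  have hg₀ : ∀ F : TensorProduct 𝕜 M N,
      g₀lin ⟨ι F, LinearMap.mem_range_self ι F⟩ = f F := by
    intro F
    have h2 : (⟨ι F, LinearMap.mem_range_self ι F⟩ : p) = e (Submodule.Quotient.mk F) := by
      apply Subtype.ext
      simp [e, LinearMap.quotKerEquivRange_apply_mk]
    rw [h2]
    simp [g₀lin]
  have hg₀le : ∀ z : p, ‖g₀lin z‖ ≤ ‖φ‖ * ‖z‖ := by
    rintro ⟨z, hz⟩
    obtain ⟨F, rfl⟩ := hz
    rw [hg₀ F]
    calc ‖f F‖ ≤ ‖φ‖ * projNorm 𝕜 F := hf F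
      _ = ‖φ‖ * ‖(ι F : TensorProduct 𝕜 X Y)‖ := by rw [h F, hnorm]
  let g₀ : p →L[𝕜] 𝕜 := g₀lin.mkContinuous ‖φ‖ hg₀le
  obtain ⟨g, hg_ext, hg_norm⟩ := exists_extension_norm_eq p g₀
  have hgle : ‖g‖ ≤ ‖φ‖ := by
    rw [hg_norm]
    exact g₀lin.mkContinuous_norm_le (norm_nonneg φ) hg₀le
  let Bhat : X →ₗ[𝕜] Y →ₗ[𝕜] 𝕜 := (TensorProduct.mk 𝕜 X Y).compr₂ g.toLinearMap
  have hBhat : ∀ x y, ‖Bhat x y‖ ≤ ‖g‖ * ‖x‖ * ‖y‖ := fun x y => by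
    have : ‖g (x ⊗ₜ[𝕜] y)‖ ≤ ‖g‖ * ‖x ⊗ₜ[𝕜] y‖ := g.le_opNorm _
    calc ‖Bhat x y‖ = ‖g (x ⊗ₜ[𝕜] y)‖ := rfl
      _ ≤ ‖g‖ * ‖x ⊗ₜ[𝕜] y‖ := g.le_opNorm _
      _ ≤ ‖g‖ * (‖x‖ * ‖y‖) :=
          mul_le_mul_of_nonneg_left ((hnorm _).trans_le (projNorm_tmul_le x y)) (norm_nonneg g)
      _ = ‖g‖ * ‖x‖ * ‖y‖ := (mul_assoc _ _ _).symm
  let φhat := LinearMap.mkContinuous₂ Bhat ‖g‖ hBhat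
  have hext : ∀ (u : M) (v : N), φhat (u : X) (v : Y) = φ u v := by
    intro u v
    have h1 : (u : X) ⊗ₜ[𝕜] (v : Y) = ι (u ⊗ₜ[𝕜] v) := by simp [hι]
    calc φhat (u : X) (v : Y) = g ((u : X) ⊗ₜ[𝕜] (v : Y)) := rfl
      _ = g ((⟨ι (u ⊗ₜ[𝕜] v), LinearMap.mem_range_self ι _⟩ : p) : TensorProduct 𝕜 X Y) := by
          rw [h1]
      _ = g₀ ⟨ι (u ⊗ₜ[𝕜] v), LinearMap.mem_range_self ι _⟩ := hg_ext _
      _ = f (u ⊗ₜ[𝕜] v) := hg₀ _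
      _ = φ u v := by simp [f, B]
  refine ⟨φhat, hext, le_antisymm ?_ ?_⟩
  · exact (LinearMap.mkContinuous₂_norm_le _ (norm_nonneg g) _).trans hgle
  · refine φ.opNorm_le_bound (norm_nonneg φhat) fun u => ?_
    refine (φ u).opNorm_le_bound (mul_nonneg (norm_nonneg φhat) (norm_nonneg u)) fun v => ?_
    rw [← hext u v]
    exact φhat.le_opNorm₂ (u : X) (v : Y)
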